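/- Let A be an n×n real symmetric matrix that is bipartite (there is a ±1 diagonal matrix S with S·A·S = −A) and nonsingular (det A ≠ 0). Then no vertex is sedentary: for every index u, inf_{t>0} |exp(itA)_{u,u}| = 0. -/

import Mathlib

open Matrix
open scoped Kronecker

/-- Transition matrix `U(t) = exp(itA)` of the continuous-time quantum walk on the
weighted graph with real symmetric adjacency matrix `A`. -/
noncomputable def transition {m : Type*} [Fintype m] [DecidableEq m]
    (A : Matrix m m ℝ) (t : ℝ) : Matrix m m ℂ :=
  NormedSpace.exp ((Complex.I * t) • A.map (fun x : ℝ => (x : ℂ)))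

/-- A vertex `u` is sedentary if `inf_{t>0} |U(t)_{u,u}| > 0`. -/
noncomputable def Sedentary {m : Type*} [Fintype m] [DecidableEq m]
    (A : Matrix m m ℝ) (u : m) : Prop :=
  0 < ⨅ t : {t : ℝ // 0 < t}, ‖transition A t u u‖

/-- `E` is the orthogonal spectral projection of `A` for the eigenvalue `θ`:
`E` is real symmetric, idempotent, and for every vector `v`, `A·v = θ·v ↔ E·v = v`. -/
def IsSpectralProj {m : Type*} [Fintype m] [DecidableEq m]
    (A : Matrix m m ℝ) (θ : ℝ) (E : Matrix m m ℝ) : Prop :=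
  E.IsSymm ∧ E * E = E ∧ ∀ v : m → ℝ, A.mulVec v = θ • v ↔ E.mulVec v = v

/-! Bipartiteness gives `S U(t) S = U(-t) = U(t)ᴴ`, so the diagonal entry `U(t)ᵤᵤ` is real,
continuous and equal to `1` at `t = 0`. Nonsingularity makes `(iA)⁻¹ U(t)` an antiderivative of
`U(t)`, whose entries are bounded by unitarity, so `∫₀ᵀ U(t)ᵤᵤ dt` stays bounded. If `|U(t)ᵤᵤ|`
were bounded below by some `c > 0`, the entry could never change sign and that integral would
be at least `cT`. -/

open NormedSpace

theorem iInf_abs_eq_zero_of_integral_le {φ : ℝ → ℝ} (hφ : Continuous φ) (h0 : 0 < φ 0) {K : ℝ}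
    (hK : ∀ T, 0 < T → ∫ t in (0)..T, φ t ≤ K) : ⨅ t : {t : ℝ // 0 < t}, |φ t| = 0 := by
  have hbdd : BddBelow (Set.range fun t : {t : ℝ // 0 < t} => |φ t|) :=
    ⟨0, by rintro _ ⟨t, rfl⟩; exact abs_nonneg _⟩
  by_contra hne
  set c := ⨅ t : {t : ℝ // 0 < t}, |φ t|
  have hc : 0 < c := (le_ciInf fun t => abs_nonneg _).lt_of_ne' hne
  have hle : ∀ t, 0 < t → c ≤ |φ t| := fun t ht => ciInf_le hbdd ⟨t, ht⟩
  -- `φ` cannot vanish on `[0, ∞)`, so by the intermediate value theorem it keeps the sign of `φ 0`.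
  have hpos : ∀ t, 0 < t → 0 < φ t := by
    intro t ht
    by_contra! hneg
    obtain ⟨s, hs, hs0⟩ := intermediate_value_Icc' ht.le hφ.continuousOn ⟨hneg, h0.le⟩
    rcases hs.1.eq_or_lt with rfl | hs
    · exact h0.ne' hs0
    · linarith [hle s hs, abs_eq_zero.mpr hs0]
  set T := (|K| + 1) / c
  have hT : 0 < T := by positivity
  have hlow : T * c ≤ ∫ t in (0)..T, φ t := by
    simpa [mul_comm] using intervalIntegral.integral_mono_on_of_le_Ioo hT.le
      (intervalIntegrable_const (μ := MeasureTheory.volume) (c := c)) (hφ.intervalIntegrable 0 T)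
      fun t ht => (hle t ht.1).trans_eq (abs_of_pos (hpos t ht.1))
  have hTc : T * c = |K| + 1 := div_mul_cancel₀ _ hc.ne'
  linarith [hK T hT, le_abs_self K]

section MatrixExp

variable {m : Type*} [Fintype m] [DecidableEq m]

theorem hasDerivAt_mul_exp_smul_apply (P C : Matrix m m ℂ) (i j : m) (t : ℝ) :
    HasDerivAt (fun t : ℝ => (P * exp (t • C)) i j) ((P * (exp (t • C) * C)) i j) t := by
  let _ : NormedRing (Matrix m m ℂ) := Matrix.linftyOpNormedRing
  let _ : NormedAlgebra ℝ (Matrix m m ℂ) := Matrix.linftyOpNormedAlgebra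
  let entry : Matrix m m ℂ →ₗ[ℝ] ℂ :=
    (Matrix.entryLinearMap ℝ ℂ i j).comp (LinearMap.mulLeft ℝ P)
  exact entry.toContinuousLinearMap.hasFDerivAt.comp_hasDerivAt t
    (hasDerivAt_exp_smul_const (𝕂 := ℝ) C t)

theorem continuous_exp_smul_apply (C : Matrix m m ℂ) (i j : m) :
    Continuous fun t : ℝ => exp (t • C) i j := by
  refine continuous_iff_continuousAt.mpr fun t => ?_
  simpa using (hasDerivAt_mul_exp_smul_apply 1 C i j t).continuousAt

theorem integral_exp_smul_apply {C : Matrix m m ℂ} (hC : IsUnit C.det) (i j : m) (a b : ℝ) :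
    ∫ t in a..b, exp (t • C) i j = (C⁻¹ * exp (b • C)) i j - (C⁻¹ * exp (a • C)) i j := by
  refine intervalIntegral.integral_eq_sub_of_hasDerivAt
    (f := fun t : ℝ => (C⁻¹ * exp (t • C)) i j) (fun t _ => ?_)
    ((continuous_exp_smul_apply C i j).intervalIntegrable a b)
  have hcomm : exp (t • C) * C = C * exp (t • C) := by
    let _ : NormedRing (Matrix m m ℂ) := Matrix.linftyOpNormedRing
    let _ : NormedAlgebra ℝ (Matrix m m ℂ) := Matrix.linftyOpNormedAlgebra
    exact ((Commute.refl C).smul_left t).exp_left.eq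
  simpa [hcomm, ← Matrix.mul_assoc, Matrix.nonsing_inv_mul C hC] using
    hasDerivAt_mul_exp_smul_apply C⁻¹ C i j t

theorem norm_mul_apply_le_of_mem_unitaryGroup (P : Matrix m m ℂ) {U : Matrix m m ℂ}
    (hU : U ∈ Matrix.unitaryGroup m ℂ) (i j : m) : ‖(P * U) i j‖ ≤ ∑ k, ‖P i k‖ := by
  rw [Matrix.mul_apply]
  refine (norm_sum_le _ _).trans (Finset.sum_le_sum fun k _ => ?_)
  rw [norm_mul]
  exact mul_le_of_le_one_right (norm_nonneg _) (entry_norm_bound_of_unitary hU k j)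

end MatrixExp


section Transition

variable {m : Type*} [Fintype m] [DecidableEq m]

theorem transition_eq_exp_smul (A : Matrix m m ℝ) (t : ℝ) :
    transition A t = exp (t • (Complex.I • A.map ((↑) : ℝ → ℂ))) := by
  rw [transition, ← Complex.coe_smul, smul_smul, mul_comm]

theorem transition_zero (A : Matrix m m ℝ) : transition A 0 = 1 := by
  simp [transition]

theorem transition_add (A : Matrix m m ℝ) (s t : ℝ) :
    transition A (s + t) = transition A s * transition A t := by
  simp only [transition_eq_exp_smul, add_smul]
  exact Matrix.exp_add_of_commute _ _ ((Commute.refl _).smul_left s |>.smul_right t)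

theorem transition_neg_left (A : Matrix m m ℝ) (t : ℝ) :
    transition (-A) t = transition A (-t) := by
  simp [transition_eq_exp_smul, Matrix.map_neg]

theorem conjTranspose_transition {A : Matrix m m ℝ} (hA : A.IsSymm) (t : ℝ) :
    (transition A t)ᴴ = transition A (-t) := by
  have hB : (A.map ((↑) : ℝ → ℂ))ᴴ = A.map (↑) := by
    ext i j
    simp [hA.apply i j]
  rw [transition_eq_exp_smul, transition_eq_exp_smul, ← Matrix.exp_conjTranspose]
  simp [hB]

theorem transition_mem_unitaryGroup {A : Matrix m m ℝ} (hA : A.IsSymm) (t : ℝ) :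
    transition A t ∈ Matrix.unitaryGroup m ℂ := by
  rw [Matrix.mem_unitaryGroup_iff, Matrix.star_eq_conjTranspose, conjTranspose_transition hA,
    ← transition_add, add_neg_cancel, transition_zero]

theorem transition_conj_of_mul_self_eq_one {S : Matrix m m ℝ} (hS : S * S = 1)
    (A : Matrix m m ℝ) (t : ℝ) :
    transition (S * A * S) t = S.map (↑) * transition A t * S.map (↑) := by
  set S' := S.map ((↑) : ℝ → ℂ)
  have hS' : S' * S' = 1 := by
    change S.map Complex.ofRealHom * S.map Complex.ofRealHom = 1
    rw [← Matrix.map_mul, hS, Matrix.map_one] <;> simp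
  have hinv : S'⁻¹ = S' := Matrix.inv_eq_right_inv hS'
  have hmap : (S * A * S).map ((↑) : ℝ → ℂ) = S' * A.map (↑) * S' :=
    map_mul Complex.ofRealHom.mapMatrix _ _ |>.trans (by rw [map_mul]; rfl)
  have hunit : IsUnit S' := .of_mul_eq_one _ hS'
  calc transition (S * A * S) t = exp (S' * ((Complex.I * t) • A.map (↑)) * S'⁻¹) := by
        rw [transition, hmap, hinv, Matrix.mul_smul, Matrix.smul_mul]
    _ = S' * transition A t * S' := by rw [Matrix.exp_conj _ _ hunit, hinv, transition]

theorem conj_transition_apply_self_of_bipartite {A : Matrix m m ℝ} (hA : A.IsSymm) {d : m → ℝ}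
    (hd : ∀ i, d i = 1 ∨ d i = -1) (hbip : diagonal d * A * diagonal d = -A) (t : ℝ) (u : m) :
    starRingEnd ℂ (transition A t u u) = transition A t u u := by
  have hdd : ∀ i, d i * d i = 1 := fun i => by rcases hd i with h | h <;> simp [h]
  have hS : diagonal d * diagonal d = 1 := by
    rw [diagonal_mul_diagonal, funext hdd, diagonal_one]
  calc starRingEnd ℂ (transition A t u u) = transition (diagonal d * A * diagonal d) t u u := by
        rw [hbip, transition_neg_left, ← conjTranspose_transition hA, conjTranspose_apply]; rfl
    _ = transition A t u u := by
        rw [transition_conj_of_mul_self_eq_one hS, diagonal_map (by simp), mul_diagonal,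
          diagonal_mul, mul_comm, ← mul_assoc, ← Complex.ofReal_mul, hdd, Complex.ofReal_one,
          one_mul]

theorem continuous_transition_apply (A : Matrix m m ℝ) (i j : m) :
    Continuous fun t => transition A t i j := by
  simpa only [transition_eq_exp_smul] using continuous_exp_smul_apply _ i j

theorem exists_norm_integral_transition_apply_le {A : Matrix m m ℝ} (hA : A.IsSymm)
    (hdet : A.det ≠ 0) (i j : m) : ∃ K, ∀ T, ‖∫ t in (0)..T, transition A t i j‖ ≤ K := by
  set C := Complex.I • A.map ((↑) : ℝ → ℂ)
  have hC : IsUnit C.det := by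
    have hdetC : (A.map ((↑) : ℝ → ℂ)).det = A.det := (RingHom.map_det Complex.ofRealHom A).symm
    rw [det_smul, hdetC]
    exact (isUnit_iff_ne_zero.mpr (pow_ne_zero _ Complex.I_ne_zero)).mul
      (isUnit_iff_ne_zero.mpr (Complex.ofReal_ne_zero.mpr hdet))
  have hU : ∀ s, transition A s = exp (s • C) := transition_eq_exp_smul A
  have hbound : ∀ s, ‖(C⁻¹ * exp (s • C)) i j‖ ≤ ∑ k, ‖C⁻¹ i k‖ := fun s => by
    rw [← hU]
    exact norm_mul_apply_le_of_mem_unitaryGroup _ (transition_mem_unitaryGroup hA s) i j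
  refine ⟨2 * ∑ k, ‖C⁻¹ i k‖, fun T => ?_⟩
  simp only [hU, integral_exp_smul_apply hC]
  linarith [norm_sub_le ((C⁻¹ * exp (T • C)) i j) ((C⁻¹ * exp ((0 : ℝ) • C)) i j), hbound T,
    hbound 0]

end Transition

/-- a nonsingular bipartite weighted graph has no sedentary vertex. -/
theorem stmt6 {n : ℕ} (A : Matrix (Fin n) (Fin n) ℝ) (hA : A.IsSymm)
    (d : Fin n → ℝ) (hd : ∀ i, d i = 1 ∨ d i = -1)
    (S : Matrix (Fin n) (Fin n) ℝ) (hS : S = Matrix.diagonal d)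
    (hbip : S * A * S = -A)
    (hdet : A.det ≠ 0) :
    ∀ u : Fin n, (⨅ t : {t : ℝ // 0 < t}, ‖transition A t u u‖) = 0 := by
  intro u
  subst hS
  set φ : ℝ → ℝ := fun t => (transition A t u u).re
  have hφ : ∀ t, transition A t u u = φ t := fun t =>
    (Complex.conj_eq_iff_re.mp (conj_transition_apply_self_of_bipartite hA hd hbip t u)).symm
  obtain ⟨K, hK⟩ := exists_norm_integral_transition_apply_le hA hdet u u
  simp_rw [hφ, Complex.norm_real, Real.norm_eq_abs]
  refine iInf_abs_eq_zero_of_integral_le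
    (Complex.continuous_re.comp (continuous_transition_apply A u u))
    (by simp [φ, transition_zero]) (K := K) fun T _ => ?_
  calc ∫ t in (0)..T, φ t ≤ ‖((∫ t in (0)..T, φ t : ℝ) : ℂ)‖ := by
        rw [Complex.norm_real, Real.norm_eq_abs]; exact le_abs_self _
    _ = ‖∫ t in (0)..T, transition A t u u‖ := by simp_rw [hφ, intervalIntegral.integral_ofReal]
    _ ≤ K := hK T
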